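/- For all real x > 0 and integers 1 ≤ α ≤ n, (1 + nx/α)^α ≤ (1+x)^α · e^{(n−α)x/(1+x)}. -/

import Mathlib

/-! Write `1 + n x / α = (1 + x) · r`; then `r ^ α ≤ exp (α (r - 1))` by `r ≤ exp (r - 1)`, and
`α (r - 1) = (n - α) x / (1 + x)`. -/

open Real

lemma pow_le_pow_mul_exp_mul_div {a b : ℝ} (ha : 0 < a) (hb : 0 ≤ b) (k : ℕ) :
    b ^ k ≤ a ^ k * exp (k * (b - a) / a) := by
  have hratio : b / a ≤ exp ((b - a) / a) := by
    simpa [sub_div, div_self ha.ne'] using add_one_le_exp (b / a - 1)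
  calc b ^ k = a ^ k * (b / a) ^ k := by rw [div_pow, mul_div_cancel₀ _ (pow_pos ha k).ne']
    _ ≤ a ^ k * exp ((b - a) / a) ^ k := by gcongr
    _ = a ^ k * exp (k * (b - a) / a) := by rw [← exp_nat_mul, mul_div_assoc]

theorem elementary_bound (x : ℝ) (hx : 0 < x) (α n : ℕ) (h1 : 1 ≤ α) :
    (1 + n * x / α) ^ α ≤ (1 + x) ^ α * Real.exp (((n : ℝ) - α) * x / (1 + x)) := by
  have hα : (α : ℝ) ≠ 0 := by positivity
  have hexponent : α * ((1 + n * x / α) - (1 + x)) = ((n : ℝ) - α) * x := by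
    field_simp
    ring
  calc (1 + n * x / α) ^ α ≤ (1 + x) ^ α * exp (α * ((1 + n * x / α) - (1 + x)) / (1 + x)) :=
        pow_le_pow_mul_exp_mul_div (by positivity) (by positivity) α
    _ = (1 + x) ^ α * exp (((n : ℝ) - α) * x / (1 + x)) := by rw [hexponent]
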